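/- Let n, r be integers with n ≥ 2 and 1 ≤ r ≤ n−2, and let g : [0,1] → ℝ be continuously differentiable. Then | ∫₀¹ (n+r−1) p_{n+r−2, r−1}(t) (g(t) − g(0)) dt | ≤ ‖g'‖ · r/(n+r), and likewise | ∫₀¹ (n+r−1) p_{n+r−2, n−1}(t) (g(t) − g(1)) dt | ≤ ‖g'‖ · r/(n+r). -/

import Mathlib

/-- Bernstein basis polynomial `p_{m,j}(t) = C(m,j) t^j (1-t)^{m-j}`. -/
noncomputable def bern (m j : ℕ) (t : ℝ) : ℝ :=
  (m.choose j : ℝ) * t ^ j * (1 - t) ^ (m - j)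

/-- Supremum norm on `[0,1]`. -/
noncomputable def supNorm (g : ℝ → ℝ) : ℝ :=
  ⨆ x : Set.Icc (0:ℝ) 1, |g x|

/-!
Both estimates come from the mean value theorem, `|g t - g 0| ≤ ‖g'‖ t` and
`|g t - g 1| ≤ ‖g'‖ (1 - t)`, integrated against the nonnegative weight `(m + 1) p_{m,j}`.
Multiplying by `t` or `1 - t` raises a Bernstein basis polynomial to degree `m + 1`, and every
`p_{m,j}` with `j ≤ m` has integral `1 / (m + 1)` (a Beta integral), so the first moments are
`(j + 1) / (m + 2)` and `(m - j + 1) / (m + 2)`; with `m = n + r - 2` both equal `r / (n + r)`.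
-/

open intervalIntegral
open scoped Nat

theorem add_one_mul_integral_pow_mul_one_sub_pow_succ (a b : ℕ) :
    ((a:ℝ) + 1) * ∫ t in (0:ℝ)..1, t ^ a * (1 - t) ^ (b + 1) =
      ((b:ℝ) + 1) * ∫ t in (0:ℝ)..1, t ^ (a + 1) * (1 - t) ^ b := by
  have hparts := integral_mul_deriv_eq_deriv_mul (a := 0) (b := 1)
    (u := fun t : ℝ => (1 - t) ^ (b + 1)) (v := fun t : ℝ => t ^ (a + 1))
    (u' := fun t => -((b + 1) * (1 - t) ^ b)) (v' := fun t => (a + 1) * t ^ a)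
    (fun t _ => by simpa using ((hasDerivAt_id t).const_sub 1).fun_pow (b + 1))
    (fun t _ => by simpa using hasDerivAt_pow (a + 1) t)
    (Continuous.intervalIntegrable (by fun_prop) _ _)
    (Continuous.intervalIntegrable (by fun_prop) _ _)
  have hu : ∀ t : ℝ, (1 - t) ^ (b + 1) * ((a + 1) * t ^ a) =
      (a + 1) * (t ^ a * (1 - t) ^ (b + 1)) := fun t => by ring
  have hv : ∀ t : ℝ, -((b + 1) * (1 - t) ^ b) * t ^ (a + 1) =
      -((b + 1) * (t ^ (a + 1) * (1 - t) ^ b)) := fun t => by ring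
  simpa [hu, hv, integral_neg] using hparts

theorem integral_pow_mul_one_sub_pow (a b : ℕ) :
    ∫ t in (0:ℝ)..1, t ^ a * (1 - t) ^ b = (a ! * b ! : ℝ) / (a + b + 1)! := by
  induction b generalizing a with
  | zero => simp [integral_pow, Nat.factorial_succ, field]
  | succ b ih =>
    have h := add_one_mul_integral_pow_mul_one_sub_pow_succ a b
    rw [ih, Nat.add_right_comm a 1 b] at h
    rw [← mul_right_inj' (a := (a:ℝ) + 1) (by positivity), h, ← add_assoc,
      Nat.factorial_succ a, Nat.factorial_succ b]
    push_cast
    ring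

@[fun_prop]
theorem continuous_bern (m j : ℕ) : Continuous (bern m j) := by
  unfold bern; fun_prop

theorem bern_nonneg (m j : ℕ) {t : ℝ} (ht : t ∈ Set.Icc (0:ℝ) 1) : 0 ≤ bern m j t := by
  have := sub_nonneg.2 ht.2
  have := ht.1
  unfold bern; positivity

theorem integral_bern {m j : ℕ} (hj : j ≤ m) :
    ∫ t in (0:ℝ)..1, bern m j t = 1 / (m + 1) := by
  simp only [bern, mul_assoc, integral_const_mul, integral_pow_mul_one_sub_pow,
    Nat.add_sub_cancel' hj, Nat.factorial_succ]
  rw [← Nat.choose_mul_factorial_mul_factorial hj]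
  have : (m.choose j : ℝ) ≠ 0 := by exact_mod_cast (Nat.choose_pos hj).ne'
  push_cast
  field_simp

theorem add_one_mul_bern_add_one_add_one (m j : ℕ) (t : ℝ) :
    ((j:ℝ) + 1) * bern (m + 1) (j + 1) t = ((m:ℝ) + 1) * bern m j t * t := by
  have h := congrArg (Nat.cast (R := ℝ)) (Nat.add_one_mul_choose_eq m j)
  push_cast at h
  simp only [bern, Nat.add_sub_add_right]
  linear_combination -(t ^ (j + 1) * (1 - t) ^ (m - j)) * h

theorem sub_add_one_mul_bern_add_one {m j : ℕ} (hj : j ≤ m) (t : ℝ) :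
    ((m:ℝ) - j + 1) * bern (m + 1) j t = ((m:ℝ) + 1) * bern m j t * (1 - t) := by
  have h := congrArg (Nat.cast (R := ℝ)) (Nat.choose_mul_succ_eq m j)
  push_cast [Nat.cast_sub (hj.trans m.le_succ)] at h
  simp only [bern, Nat.sub_add_comm hj]
  linear_combination -(t ^ j * (1 - t) ^ (m - j + 1)) * h

theorem integral_bern_mul_id {m j : ℕ} (hj : j ≤ m) :
    ∫ t in (0:ℝ)..1, ((m:ℝ) + 1) * bern m j t * t = (j + 1) / (m + 2) := by
  simp only [← add_one_mul_bern_add_one_add_one, integral_const_mul,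
    integral_bern (Nat.succ_le_succ hj)]
  push_cast
  ring

theorem integral_bern_mul_one_sub {m j : ℕ} (hj : j ≤ m) :
    ∫ t in (0:ℝ)..1, ((m:ℝ) + 1) * bern m j t * (1 - t) = (m - j + 1) / (m + 2) := by
  simp only [← sub_add_one_mul_bern_add_one hj, integral_const_mul,
    integral_bern (hj.trans m.le_succ)]
  push_cast
  ring

theorem abs_deriv_le_supNorm {g : ℝ → ℝ} (hg : ContDiff ℝ 1 g) {x : ℝ}
    (hx : x ∈ Set.Icc (0:ℝ) 1) :
    |deriv g x| ≤ supNorm (deriv g) := by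
  have hc : ContinuousOn (fun x => |deriv g x|) (Set.Icc 0 1) :=
    (hg.continuous_deriv le_rfl).abs.continuousOn
  have hbdd := isCompact_Icc.bddAbove_image hc
  rw [Set.image_eq_range] at hbdd
  exact le_ciSup hbdd ⟨x, hx⟩

theorem abs_sub_le_supNorm_deriv_mul {g : ℝ → ℝ} (hg : ContDiff ℝ 1 g) {x y : ℝ}
    (hx : x ∈ Set.Icc (0:ℝ) 1) (hy : y ∈ Set.Icc (0:ℝ) 1) :
    |g y - g x| ≤ supNorm (deriv g) * |y - x| :=
  Convex.norm_image_sub_le_of_norm_deriv_le (fun z _ => hg.differentiable one_ne_zero z)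
    (fun _ hz => abs_deriv_le_supNorm hg hz) (convex_Icc 0 1) hx hy

theorem abs_integral_mul_le {w f d : ℝ → ℝ} {L : ℝ} (hw : Continuous w) (hf : Continuous f)
    (hd : Continuous d) (hw0 : ∀ t ∈ Set.Icc (0:ℝ) 1, 0 ≤ w t)
    (hfd : ∀ t ∈ Set.Icc (0:ℝ) 1, |f t| ≤ L * d t) :
    |∫ t in (0:ℝ)..1, w t * f t| ≤ L * ∫ t in (0:ℝ)..1, w t * d t := by
  rw [← integral_const_mul]
  refine (abs_integral_le_integral_abs zero_le_one).trans <|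
    integral_mono_on zero_le_one (Continuous.intervalIntegrable (by fun_prop) _ _)
      (Continuous.intervalIntegrable (by fun_prop) _ _) fun t ht => ?_
  rw [abs_mul, abs_of_nonneg (hw0 t ht), mul_left_comm]
  exact mul_le_mul_of_nonneg_left (hfd t ht) (hw0 t ht)

theorem abs_integral_bern_mul_sub_left_le {m j : ℕ} (hj : j ≤ m) {g : ℝ → ℝ}
    (hg : ContDiff ℝ 1 g) :
    |∫ t in (0:ℝ)..1, ((m:ℝ) + 1) * bern m j t * (g t - g 0)| ≤
      supNorm (deriv g) * ((j + 1) / (m + 2)) := by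
  have := hg.continuous
  rw [← integral_bern_mul_id hj]
  refine abs_integral_mul_le (by fun_prop) (by fun_prop) continuous_id
    (fun t ht => mul_nonneg (by positivity) (bern_nonneg m j ht)) fun t ht => ?_
  simpa [abs_of_nonneg ht.1] using
    abs_sub_le_supNorm_deriv_mul hg (Set.left_mem_Icc.2 zero_le_one) ht

theorem abs_integral_bern_mul_sub_right_le {m j : ℕ} (hj : j ≤ m) {g : ℝ → ℝ}
    (hg : ContDiff ℝ 1 g) :
    |∫ t in (0:ℝ)..1, ((m:ℝ) + 1) * bern m j t * (g t - g 1)| ≤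
      supNorm (deriv g) * ((m - j + 1) / (m + 2)) := by
  have := hg.continuous
  rw [← integral_bern_mul_one_sub hj]
  refine abs_integral_mul_le (by fun_prop) (by fun_prop) (by fun_prop)
    (fun t ht => mul_nonneg (by positivity) (bern_nonneg m j ht)) fun t ht => ?_
  simpa [abs_sub_comm t, abs_of_nonneg (sub_nonneg.2 ht.2)] using
    abs_sub_le_supNorm_deriv_mul hg (Set.right_mem_Icc.2 zero_le_one) ht

theorem endpoint_integral_estimates_general
    (n r : ℕ) (hn : 2 ≤ n) (hr1 : 1 ≤ r)
    (g : ℝ → ℝ) (hg : ContDiff ℝ 1 g) :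
    |∫ t in (0:ℝ)..1, ((n : ℝ) + (r : ℝ) - 1) * bern (n + r - 2) (r - 1) t * (g t - g 0)| ≤
        supNorm (deriv g) * ((r : ℝ) / ((n : ℝ) + (r : ℝ))) ∧
      |∫ t in (0:ℝ)..1, ((n : ℝ) + (r : ℝ) - 1) * bern (n + r - 2) (n - 1) t * (g t - g 1)| ≤
        supNorm (deriv g) * ((r : ℝ) / ((n : ℝ) + (r : ℝ))) := by
  have hm : ((n + r - 2 : ℕ) : ℝ) = n + r - 2 := by
    rw [Nat.cast_sub (by omega)]; push_cast; ring
  have hcoef : (n : ℝ) + r - 1 = ((n + r - 2 : ℕ) : ℝ) + 1 := by rw [hm]; ring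
  rw [hcoef]
  constructor
  · convert abs_integral_bern_mul_sub_left_le (by omega : r - 1 ≤ n + r - 2) hg
      using 3 <;>
      simp only [hm, Nat.cast_sub hr1, Nat.cast_one] <;> ring
  · convert abs_integral_bern_mul_sub_right_le (by omega : n - 1 ≤ n + r - 2) hg
      using 3 <;>
      simp only [hm, Nat.cast_sub (by omega : 1 ≤ n), Nat.cast_one] <;> ring

theorem endpoint_integral_estimates
    (n r : ℕ) (hn : 2 ≤ n) (hr1 : 1 ≤ r) (hr2 : r + 2 ≤ n)
    (g : ℝ → ℝ) (hg : ContDiff ℝ 1 g) :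
    |∫ t in (0:ℝ)..1, ((n : ℝ) + (r : ℝ) - 1) * bern (n + r - 2) (r - 1) t * (g t - g 0)| ≤
        supNorm (deriv g) * ((r : ℝ) / ((n : ℝ) + (r : ℝ))) ∧
      |∫ t in (0:ℝ)..1, ((n : ℝ) + (r : ℝ) - 1) * bern (n + r - 2) (n - 1) t * (g t - g 1)| ≤
        supNorm (deriv g) * ((r : ℝ) / ((n : ℝ) + (r : ℝ))) :=
  endpoint_integral_estimates_general n r hn hr1 g hg
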